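/- Let $(X,d,\mu)$ be a doubling metric measure space with doubling constant $c_\mu$, let $f$ be a non-negative locally integrable function on $X$, fix a ball $B_0=B(x_0,R)$, and let $\frac{1}{\mu(B_0)}\int_{11B_0}f\,d\mu \le \lambda_0\le\lambda_1\le\cdots\le\lambda_N$. Then for each $n=0,\dots,N$ there exists a countable family of Calderón–Zygmund balls $\{B_i(\lambda_n)\}_i$ for $f$ at level $\lambda_n$ relative to $B_0$ (i.e., pairwise disjoint balls centered in $B_0$ with $5B_i\subset 11B_0$, $f\le\lambda_n$ a.e. on $B_0\setminus\bigcup_i 5B_i$, $\lambda_n<\fint_{B_i}f\,d\mu\le c_\mu^3\lambda_n$, and $c_\mu^{-3}\lambda_n<\fint_{5B_i}f\,d\mu\le\lambda_n$), such that moreover for each $n<N$, every ball $B_i(\lambda_{n+1})$ is contained in $5B_j(\lambda_n)$ for some $j$. -/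

import Mathlib

/-!
At level `λ`, test a point `x ∈ B₀` along the radii `2R/5, 2R/25, …`: if the average of `f` over
some `B(x, 2R/5^(m+1))` exceeds `λ`, the first such radius is the stopping radius `ρ_λ(x)`. Then
`⨍_{B(x,ρ)} f > λ ≥ ⨍_{B(x,5ρ)} f`, since either `5ρ` is the previous radius or `5ρ = 2R`, and
`B₀ ⊆ B(x, 2R) ⊆ 11B₀` bounds that average by `λ₀ ≤ λ`; doubling gives the `cμ³` bounds.
Vitali's covering lemma selects disjoint stopping balls whose `5`-dilates cover all of them, and
by Lebesgue's differentiation theorem almost every point of `B₀` where `f > λ` passes the test.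
Raising the level shrinks both the set of points passing the test and their stopping radii, so a
ball at level `λ_{n+1}` lies in the ball with the same centre at level `λ_n`, hence in the
`5`-dilate of a selected one.
-/

open MeasureTheory Metric Set ENNReal

/-- `(X, d, μ)` is a doubling metric measure space with doubling constant `cμ`:
every ball has positive finite measure and `μ(2B) ≤ cμ · μ(B)` for all balls `B`. -/
def IsDoubling {X : Type*} [MetricSpace X] [MeasurableSpace X]
    (μ : Measure X) (cμ : ℝ) : Prop :=
  (∀ (x : X) (r : ℝ), 0 < r → 0 < μ (Metric.ball x r) ∧ μ (Metric.ball x r) < ⊤) ∧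
  ∀ (x : X) (r : ℝ), 0 < r → μ (Metric.ball x (2 * r)) ≤ ENNReal.ofReal cμ * μ (Metric.ball x r)

/-- `{B i = ball (c i) (r i)}_{i ∈ S}` is a family of Calderón–Zygmund balls for the
nonnegative function `g` at level `lam` relative to the ball `B₀ = B(x₀, R)`:
a countable family of pairwise disjoint balls centered at points of `B₀` with
`5Bᵢ ⊆ 11B₀`, such that `g ≤ lam` a.e. on `B₀ \ ⋃ᵢ 5Bᵢ`,
`lam < ⨍_{Bᵢ} g ≤ cμ³ lam` and `cμ⁻³ lam < ⨍_{5Bᵢ} g ≤ lam`. -/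
def IsCZBalls {X : Type*} [MetricSpace X] [MeasurableSpace X]
    (μ : Measure X) (cμ : ℝ) (g : X → ℝ) (x₀ : X) (R lam : ℝ)
    (S : Set ℕ) (c : ℕ → X) (r : ℕ → ℝ) : Prop :=
  (∀ i ∈ S, 0 < r i) ∧
  (∀ i ∈ S, c i ∈ Metric.ball x₀ R) ∧
  (∀ i ∈ S, Metric.ball (c i) (5 * r i) ⊆ Metric.ball x₀ (11 * R)) ∧
  (S.PairwiseDisjoint fun i => Metric.ball (c i) (r i)) ∧
  (∀ᵐ x ∂μ, x ∈ Metric.ball x₀ R \ (⋃ i ∈ S, Metric.ball (c i) (5 * r i)) → g x ≤ lam) ∧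
  (∀ i ∈ S, lam < ⨍ x in Metric.ball (c i) (r i), g x ∂μ ∧
      ⨍ x in Metric.ball (c i) (r i), g x ∂μ ≤ cμ ^ 3 * lam) ∧
  (∀ i ∈ S, lam / cμ ^ 3 < ⨍ x in Metric.ball (c i) (5 * r i), g x ∂μ ∧
      ⨍ x in Metric.ball (c i) (5 * r i), g x ∂μ ≤ lam)

open Filter Topology

section Averages

variable {α : Type*} [MeasurableSpace α] {μ : Measure α} {f : α → ℝ} {s t u : Set α}

lemma setAverage_le_inv_measureReal_mul_setIntegral (hst : s ⊆ t) (htu : t ⊆ u)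
    (hf0 : ∀ x, 0 ≤ f x) (hfu : IntegrableOn f u μ) (hs : 0 < μ.real s) (ht : μ t ≠ ⊤) :
    ⨍ x in t, f x ∂μ ≤ (μ.real s)⁻¹ * ∫ x in u, f x ∂μ := by
  rw [setAverage_eq, smul_eq_mul]
  exact mul_le_mul (inv_anti₀ hs (measureReal_mono hst ht))
    (setIntegral_mono_set hfu (.of_forall hf0) htu.eventuallyLE)
    (integral_nonneg hf0) (inv_nonneg.2 hs.le)

lemma setAverage_le_mul_setAverage_of_subset {C : ℝ} (hst : s ⊆ t) (hf0 : ∀ x, 0 ≤ f x)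
    (hft : IntegrableOn f t μ) (hs : 0 < μ.real s) (ht : μ t ≠ ⊤)
    (hC : μ.real t ≤ C * μ.real s) :
    ⨍ x in s, f x ∂μ ≤ C * ⨍ x in t, f x ∂μ := by
  calc ⨍ x in s, f x ∂μ ≤ (μ.real s)⁻¹ * ∫ x in t, f x ∂μ :=
        setAverage_le_inv_measureReal_mul_setIntegral subset_rfl hst hf0 hft hs
          (measure_ne_top_of_subset hst ht)
    _ = (μ.real s)⁻¹ * μ.real t * ⨍ x in t, f x ∂μ := by
        rw [mul_assoc, ← smul_eq_mul (μ.real t), measure_smul_setAverage _ ht]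
    _ ≤ C * ⨍ x in t, f x ∂μ := by
        gcongr
        · exact integral_nonneg hf0
        · rwa [inv_mul_le_iff₀ hs, mul_comm]

end Averages

namespace IsDoubling

variable {X : Type*} [MetricSpace X] [MeasurableSpace X] {μ : Measure X} {cμ : ℝ}

lemma measure_ball_ne_top (hdoub : IsDoubling μ cμ) (x : X) (r : ℝ) : μ (ball x r) ≠ ⊤ := by
  rcases le_or_gt r 0 with hr | hr
  · simp [ball_eq_empty.2 hr]
  · exact (hdoub.1 x r hr).2.ne

lemma measureReal_ball_pos (hdoub : IsDoubling μ cμ) (x : X) {r : ℝ} (hr : 0 < r) :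
    0 < μ.real (ball x r) :=
  ENNReal.toReal_pos (hdoub.1 x r hr).1.ne' (hdoub.measure_ball_ne_top x r)

lemma measure_ball_two_pow_mul_le (hdoub : IsDoubling μ cμ) (x : X) {r : ℝ} (hr : 0 < r)
    (k : ℕ) : μ (ball x (2 ^ k * r)) ≤ ENNReal.ofReal cμ ^ k * μ (ball x r) := by
  induction k with
  | zero => simp
  | succ k ih =>
    calc μ (ball x (2 ^ (k + 1) * r)) = μ (ball x (2 * (2 ^ k * r))) := by ring_nf
      _ ≤ ENNReal.ofReal cμ * μ (ball x (2 ^ k * r)) := hdoub.2 x _ (by positivity)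
      _ ≤ ENNReal.ofReal cμ * (ENNReal.ofReal cμ ^ k * μ (ball x r)) := by gcongr
      _ = ENNReal.ofReal cμ ^ (k + 1) * μ (ball x r) := by ring

lemma measureReal_ball_le_pow_mul (hdoub : IsDoubling μ cμ) (hcμ : 0 ≤ cμ) (x : X) {r s : ℝ}
    (hr : 0 < r) {k : ℕ} (hs : s ≤ 2 ^ k * r) :
    μ.real (ball x s) ≤ cμ ^ k * μ.real (ball x r) := by
  calc μ.real (ball x s) ≤ (ENNReal.ofReal cμ ^ k * μ (ball x r)).toReal :=
        ENNReal.toReal_mono (by finiteness [hdoub.measure_ball_ne_top x r])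
          ((measure_mono (ball_subset_ball hs)).trans (hdoub.measure_ball_two_pow_mul_le x hr k))
    _ = cμ ^ k * μ.real (ball x r) := by
        rw [ENNReal.toReal_mul, ENNReal.toReal_pow, ENNReal.toReal_ofReal hcμ, measureReal_def]

lemma setAverage_ball_le_mul_setAverage_ball_five_mul (hdoub : IsDoubling μ cμ) (hcμ : 0 ≤ cμ)
    {f : X → ℝ} (hf0 : ∀ x, 0 ≤ f x) (hf : ∀ x r, IntegrableOn f (ball x r) μ) (x : X) {r : ℝ}
    (hr : 0 < r) : ⨍ y in ball x r, f y ∂μ ≤ cμ ^ 3 * ⨍ y in ball x (5 * r), f y ∂μ :=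
  setAverage_le_mul_setAverage_of_subset (ball_subset_ball (by linarith)) hf0 (hf x _)
    (hdoub.measureReal_ball_pos x hr) (hdoub.measure_ball_ne_top _ _)
    (hdoub.measureReal_ball_le_pow_mul hcμ x hr (by linarith))

lemma sigmaFinite (hdoub : IsDoubling μ cμ) (x₀ : X) : SigmaFinite μ :=
  Measure.sigmaFinite_of_countable (countable_range fun n : ℕ => ball x₀ n)
    (forall_mem_range.2 fun n => (hdoub.measure_ball_ne_top x₀ n).lt_top)
    (by rw [sUnion_range, iUnion_ball_nat])

lemma isLocallyFiniteMeasure (hdoub : IsDoubling μ cμ) : IsLocallyFiniteMeasure μ :=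
  ⟨fun x => ⟨ball x 1, ball_mem_nhds x one_pos, (hdoub.measure_ball_ne_top x 1).lt_top⟩⟩

lemma isUnifLocDoublingMeasure (hdoub : IsDoubling μ cμ) : IsUnifLocDoublingMeasure μ := by
  refine ⟨⟨cμ.toNNReal ^ 2, ?_⟩⟩
  filter_upwards [self_mem_nhdsWithin] with ε (hε : 0 < ε) x
  calc μ (closedBall x (2 * ε)) ≤ μ (ball x (2 ^ 2 * ε)) :=
        measure_mono (closedBall_subset_ball (by linarith))
    _ ≤ ENNReal.ofReal cμ ^ 2 * μ (ball x ε) := hdoub.measure_ball_two_pow_mul_le x hε 2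
    _ ≤ _ := by
        push_cast
        exact mul_le_mul_right (measure_mono ball_subset_closedBall) _

lemma countable_of_pairwise_le_dist [OpensMeasurableSpace X] [SFinite μ]
    (hdoub : IsDoubling μ cμ) {ε : ℝ} (hε : 0 < ε) {s : Set X}
    (hs : s.Pairwise fun a b => ε ≤ dist a b) : s.Countable := by
  have hdisj : Pairwise (Function.onFun Disjoint fun y : s => ball (y : X) (ε / 2)) :=
    fun y z hyz => ball_disjoint_ball (by linarith [hs y.2 z.2 (Subtype.coe_injective.ne hyz)])
  have := Measure.countable_meas_pos_of_disjoint_iUnion (μ := μ) (fun _ => measurableSet_ball)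
    hdisj
  simp only [(hdoub.1 _ _ (half_pos hε)).1, ofPred_true, countable_univ_iff] at this
  exact countable_coe_iff.1 this

/-- A maximal `ε`-separated set is `ε`-dense, and countable because the disjoint balls of radius
`ε / 2` around its points have positive measure. -/
lemma secondCountableTopology [OpensMeasurableSpace X] (hdoub : IsDoubling μ cμ) :
    SecondCountableTopology X := by
  refine Metric.secondCountable_of_almost_dense_set fun ε hε => ?_
  rcases isEmpty_or_nonempty X with hX | ⟨⟨x₀⟩⟩
  · exact ⟨∅, countable_empty, isEmptyElim⟩
  have := hdoub.sigmaFinite x₀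
  obtain ⟨s, hs⟩ := zorn_subset {s : Set X | s.Pairwise fun a b => ε ≤ dist a b}
    fun c hc hchain => ⟨⋃₀ c, hchain.pairwise_sUnion.2 hc, fun _ => subset_sUnion_of_mem⟩
  refine ⟨s, hdoub.countable_of_pairwise_le_dist hε hs.prop, fun x => ?_⟩
  by_contra! hfar
  have hxs : x ∈ s := hs.mem_of_prop_insert <| hs.prop.insert fun y hy _ =>
    ⟨(hfar y hy).le, dist_comm x y ▸ (hfar y hy).le⟩
  simpa using (hfar x hxs).trans_le' hε.le

/-- Reduced to the closed-ball version `IsUnifLocDoublingMeasure.ae_tendsto_average_norm_sub`: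
as `μ (closedBall x r) ≤ cμ * μ (ball x r)`, the mean oscillation of `f` over `ball x r` is at most
`cμ` times the one over `closedBall x r`. -/
theorem ae_tendsto_setAverage_ball [BorelSpace X] (hdoub : IsDoubling μ cμ) (hcμ : 0 ≤ cμ)
    {E : Type*} [NormedAddCommGroup E] [NormedSpace ℝ E] [CompleteSpace E] {f : X → E}
    (hf : ∀ x r, IntegrableOn f (ball x r) μ) :
    ∀ᵐ x ∂μ, Tendsto (fun r => ⨍ y in ball x r, f y ∂μ) (𝓝[>] 0) (𝓝 (f x)) := by
  have := hdoub.secondCountableTopology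
  have := hdoub.isLocallyFiniteMeasure
  have := hdoub.isUnifLocDoublingMeasure
  have hfl : LocallyIntegrable f μ := fun x => ⟨ball x 1, ball_mem_nhds x one_pos, hf x 1⟩
  filter_upwards [IsUnifLocDoublingMeasure.ae_tendsto_average_norm_sub μ hfl 1] with x hx
  have hosc := hx (fun _ => x) id tendsto_id
    (eventually_nhdsWithin_of_forall fun r (hr : 0 < r) =>
      mem_closedBall_self (by simpa using hr.le))
  rw [tendsto_iff_norm_sub_tendsto_zero]
  refine squeeze_zero' (.of_forall fun _ => norm_nonneg _) ?_ (by simpa using hosc.const_mul cμ)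
  filter_upwards [self_mem_nhdsWithin] with r (hr : 0 < r)
  have hball := hdoub.measureReal_ball_pos x hr
  have hcb : μ (closedBall x r) ≠ ⊤ :=
    measure_ne_top_of_subset (closedBall_subset_ball (by linarith : r < 2 * r))
      (hdoub.measure_ball_ne_top x (2 * r))
  have hball := hdoub.measureReal_ball_pos x hr
  have hball0 : μ (ball x r) ≠ 0 := (hdoub.1 x r hr).1.ne'
  have hcb : μ (closedBall x r) ≠ ⊤ :=
    measure_ne_top_of_subset (closedBall_subset_ball (by linarith : r < 2 * r))
      (hdoub.measure_ball_ne_top x (2 * r))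
  calc ‖⨍ y in ball x r, f y ∂μ - f x‖ = ‖⨍ y in ball x r, (f y - f x) ∂μ‖ := by
        have hinv : (μ (ball x r))⁻¹ ≠ ⊤ := ENNReal.inv_ne_top.2 hball0
        rw [setAverage_eq' _ (fun y => f y - f x), integral_sub ((hf x r).smul_measure hinv)
          ((integrableOn_const (hdoub.measure_ball_ne_top x r)).smul_measure hinv),
          ← setAverage_eq', ← setAverage_eq',
          setAverage_const hball0 (hdoub.measure_ball_ne_top x r)]
    _ ≤ ⨍ y in ball x r, ‖f y - f x‖ ∂μ := by
        rw [setAverage_eq', setAverage_eq']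
        exact norm_integral_le_integral_norm _
    _ ≤ cμ * ⨍ y in closedBall x r, ‖f y - f x‖ ∂μ := by
        refine setAverage_le_mul_setAverage_of_subset ball_subset_closedBall
          (fun _ => norm_nonneg _) ?_ hball hcb ?_
        · exact (((hf x (2 * r)).mono_set (closedBall_subset_ball (by linarith))).sub
            (integrableOn_const hcb)).norm
        · calc μ.real (closedBall x r) ≤ μ.real (ball x (2 * r)) :=
                measureReal_mono (closedBall_subset_ball (by linarith))
                  (hdoub.measure_ball_ne_top _ _)
            _ ≤ cμ * μ.real (ball x r) := by
                simpa using hdoub.measureReal_ball_le_pow_mul hcμ x hr (k := 1) (by simp)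

end IsDoubling

lemma Set.Countable.exists_bijOn_nat {α : Type*} [Nonempty α] {u : Set α} (hu : u.Countable) :
    ∃ (S : Set ℕ) (c : ℕ → α), BijOn c S u := by
  obtain ⟨e, he⟩ := countable_iff_exists_injOn.1 hu
  exact ⟨e '' u, Function.invFunOn e u,
    BijOn.symm he.bijOn_image.invOn_invFunOn.symm he.bijOn_image⟩

theorem exists_countable_pairwiseDisjoint_ball_subset_ball_five_mul {X : Type*} [MetricSpace X]
    [TopologicalSpace.SeparableSpace X] (t : Set X) (ρ : X → ℝ) {R : ℝ} (hρ : ∀ x ∈ t, 0 < ρ x)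
    (hρR : ∀ x ∈ t, ρ x ≤ R) :
    ∃ u ⊆ t, u.Countable ∧ u.PairwiseDisjoint (fun x => ball x (ρ x)) ∧
      ∀ x ∈ t, ∃ y ∈ u, ball x (ρ x) ⊆ ball y (5 * ρ y) := by
  obtain ⟨u, hut, hdisj, hcov⟩ := Vitali.exists_disjoint_subfamily_covering_enlargement
    (fun x => ball x (ρ x)) t ρ 2 one_lt_two (fun x hx => (hρ x hx).le) R hρR
    (fun x hx => nonempty_ball.2 (hρ x hx))
  refine ⟨u, hut, hdisj.countable_of_isOpen (fun _ _ => isOpen_ball)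
    (fun y hy => nonempty_ball.2 (hρ y (hut hy))), hdisj, fun x hx => ?_⟩
  obtain ⟨y, hy, ⟨z, hzx, hzy⟩, hxy⟩ := hcov x hx
  refine ⟨y, hy, ball_subset_ball' ?_⟩
  rw [mem_ball, dist_comm] at hzx
  linarith [dist_triangle x z y, mem_ball.1 hzy]

section StoppingRadius

variable {X : Type*} [MetricSpace X] [MeasurableSpace X] (μ : Measure X) (f : X → ℝ)
  (x₀ : X) (R : ℝ)

noncomputable def czRadius (m : ℕ) : ℝ := 2 * R / 5 ^ (m + 1)

def AverageExceeds (lam : ℝ) (x : X) : Prop :=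
  ∃ m, lam < ⨍ y in ball x (czRadius R m), f y ∂μ

def czCenters (lam : ℝ) : Set X := {x ∈ ball x₀ R | AverageExceeds μ f R lam x}

/-- As `sInf ∅ = 0`, this is `czRadius R 0` at points where no average exceeds `lam`. -/
noncomputable def stoppingRadius (lam : ℝ) (x : X) : ℝ :=
  czRadius R (sInf {m | lam < ⨍ y in ball x (czRadius R m), f y ∂μ})

variable {μ f x₀ R}

lemma czRadius_pos (hR : 0 < R) (m : ℕ) : 0 < czRadius R m := by
  unfold czRadius
  positivity

lemma five_mul_czRadius_zero : 5 * czRadius R 0 = 2 * R := by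
  unfold czRadius
  ring

lemma five_mul_czRadius_succ (m : ℕ) : 5 * czRadius R (m + 1) = czRadius R m := by
  simp only [czRadius, pow_succ]
  field_simp

lemma czRadius_antitone (hR : 0 ≤ R) : Antitone (czRadius R) := fun m n hmn => by
  unfold czRadius
  gcongr
  norm_num

lemma five_mul_czRadius_le (hR : 0 ≤ R) (m : ℕ) : 5 * czRadius R m ≤ 2 * R := by
  rw [← five_mul_czRadius_zero]
  gcongr
  exact czRadius_antitone hR m.zero_le

lemma tendsto_czRadius (hR : 0 < R) : Tendsto (czRadius R) atTop (𝓝[>] 0) :=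
  tendsto_nhdsWithin_iff.2 ⟨tendsto_const_nhds.div_atTop
    ((tendsto_pow_atTop_atTop_of_one_lt (by norm_num)).comp (tendsto_add_atTop_nat 1)),
    .of_forall (czRadius_pos hR)⟩

variable (μ f) in
lemma stoppingRadius_pos (hR : 0 < R) (lam : ℝ) (x : X) : 0 < stoppingRadius μ f R lam x :=
  czRadius_pos hR _

variable (μ f) in
lemma five_mul_stoppingRadius_le (hR : 0 ≤ R) (lam : ℝ) (x : X) :
    5 * stoppingRadius μ f R lam x ≤ 2 * R :=
  five_mul_czRadius_le hR _

lemma AverageExceeds.mono {lam lam' : ℝ} {x : X} (hlam : lam ≤ lam')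
    (hx : AverageExceeds μ f R lam' x) : AverageExceeds μ f R lam x :=
  hx.imp fun _ h => hlam.trans_lt h

lemma AverageExceeds.lt_setAverage_stoppingRadius {lam : ℝ} {x : X}
    (hx : AverageExceeds μ f R lam x) :
    lam < ⨍ y in ball x (stoppingRadius μ f R lam x), f y ∂μ :=
  Nat.sInf_mem hx

lemma setAverage_ball_five_mul_stoppingRadius_le {lam : ℝ} {x : X}
    (h2R : ⨍ y in ball x (2 * R), f y ∂μ ≤ lam) :
    ⨍ y in ball x (5 * stoppingRadius μ f R lam x), f y ∂μ ≤ lam := by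
  unfold stoppingRadius
  cases hk : sInf {m | lam < ⨍ y in ball x (czRadius R m), f y ∂μ} with
  | zero => rwa [five_mul_czRadius_zero]
  | succ k =>
    rw [five_mul_czRadius_succ]
    have hlt : k < sInf {m | lam < ⨍ y in ball x (czRadius R m), f y ∂μ} := hk ▸ k.lt_succ_self
    exact not_lt.1 (Nat.notMem_of_lt_sInf hlt)

lemma stoppingRadius_anti (hR : 0 ≤ R) {lam lam' : ℝ} {x : X} (hlam : lam ≤ lam')
    (hx : AverageExceeds μ f R lam' x) :
    stoppingRadius μ f R lam' x ≤ stoppingRadius μ f R lam x :=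
  czRadius_antitone hR (Nat.sInf_le (hlam.trans_lt (Nat.sInf_mem hx)))

end StoppingRadius

section CalderonZygmund

variable {X : Type*} [MetricSpace X] [MeasurableSpace X] {μ : Measure X} {cμ : ℝ} {f : X → ℝ}
  {x₀ : X} {R lam : ℝ}

lemma AverageExceeds.setAverage_stoppingRadius_bounds (hdoub : IsDoubling μ cμ) (hcμ : 0 < cμ)
    (hf0 : ∀ x, 0 ≤ f x) (hf : ∀ x r, IntegrableOn f (ball x r) μ) (hR : 0 < R) {x : X}
    (h2R : ⨍ y in ball x (2 * R), f y ∂μ ≤ lam) (hx : AverageExceeds μ f R lam x) :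
    (lam < ⨍ y in ball x (stoppingRadius μ f R lam x), f y ∂μ ∧
      ⨍ y in ball x (stoppingRadius μ f R lam x), f y ∂μ ≤ cμ ^ 3 * lam) ∧
    (lam / cμ ^ 3 < ⨍ y in ball x (5 * stoppingRadius μ f R lam x), f y ∂μ ∧
      ⨍ y in ball x (5 * stoppingRadius μ f R lam x), f y ∂μ ≤ lam) := by
  have hlt := hx.lt_setAverage_stoppingRadius
  have hle := setAverage_ball_five_mul_stoppingRadius_le h2R
  have hdbl := hdoub.setAverage_ball_le_mul_setAverage_ball_five_mul hcμ.le hf0 hf x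
    (stoppingRadius_pos μ f hR lam x)
  exact ⟨⟨hlt, hdbl.trans (by gcongr)⟩, (div_lt_iff₀' (by positivity)).2 (hlt.trans_le hdbl), hle⟩

lemma setAverage_ball_two_mul_le (hdoub : IsDoubling μ cμ) (hf0 : ∀ x, 0 ≤ f x)
    (hf : ∀ x r, IntegrableOn f (ball x r) μ) (hR : 0 < R) {x : X} (hx : x ∈ ball x₀ R) :
    ⨍ y in ball x (2 * R), f y ∂μ ≤ (μ.real (ball x₀ R))⁻¹ * ∫ y in ball x₀ (11 * R), f y ∂μ :=
  setAverage_le_inv_measureReal_mul_setIntegral (ball_subset_ball' (by linarith [mem_ball'.1 hx]))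
    (ball_subset_ball' (by linarith [mem_ball.1 hx])) hf0 (hf x₀ (11 * R))
    (hdoub.measureReal_ball_pos x₀ hR) (hdoub.measure_ball_ne_top _ _)

lemma ae_averageExceeds_of_lt [BorelSpace X] (hdoub : IsDoubling μ cμ) (hcμ : 0 ≤ cμ)
    (hf : ∀ x r, IntegrableOn f (ball x r) μ) (hR : 0 < R) :
    ∀ᵐ x ∂μ, ∀ lam, lam < f x → AverageExceeds μ f R lam x := by
  filter_upwards [hdoub.ae_tendsto_setAverage_ball hcμ hf] with x hx lam hlam
  exact ((hx.comp (tendsto_czRadius hR)).eventually (lt_mem_nhds hlam)).exists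

variable {u : Set X} {S : Set ℕ} {c : ℕ → X}

theorem isCZBalls_of_bijOn [BorelSpace X] (hdoub : IsDoubling μ cμ) (hcμ : 0 < cμ)
    (hf0 : ∀ x, 0 ≤ f x) (hf : ∀ x r, IntegrableOn f (ball x r) μ) (hR : 0 < R)
    (h2R : ∀ x ∈ ball x₀ R, ⨍ y in ball x (2 * R), f y ∂μ ≤ lam) (hc : BijOn c S u)
    (hu : u ⊆ czCenters μ f x₀ R lam)
    (hdisj : u.PairwiseDisjoint fun x => ball x (stoppingRadius μ f R lam x))
    (hcover : ∀ x ∈ czCenters μ f x₀ R lam, ∃ y ∈ u,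
      ball x (stoppingRadius μ f R lam x) ⊆ ball y (5 * stoppingRadius μ f R lam y)) :
    IsCZBalls μ cμ f x₀ R lam S c fun i => stoppingRadius μ f R lam (c i) := by
  have hmem : ∀ i ∈ S, c i ∈ czCenters μ f x₀ R lam := fun i hi => hu (hc.mapsTo hi)
  have hav := fun i (hi : i ∈ S) =>
    (hmem i hi).2.setAverage_stoppingRadius_bounds hdoub hcμ hf0 hf hR (h2R _ (hmem i hi).1)
  refine ⟨fun i _ => stoppingRadius_pos μ f hR lam (c i), fun i hi => (hmem i hi).1,
    fun i hi => ball_subset_ball' ?_, ?_, ?_, fun i hi => (hav i hi).1, fun i hi => (hav i hi).2⟩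
  · linarith [five_mul_stoppingRadius_le μ f hR.le lam (c i), mem_ball.1 (hmem i hi).1]
  · rw [← hc.image_eq] at hdisj
    exact hc.injOn.pairwiseDisjoint_image.1 hdisj
  · filter_upwards [ae_averageExceeds_of_lt hdoub hcμ.le hf hR] with x hx ⟨hxB, hxU⟩
    by_contra! hlt
    obtain ⟨y, hy, hsub⟩ := hcover x ⟨hxB, hx lam hlt⟩
    obtain ⟨i, hi, rfl⟩ := hc.surjOn hy
    exact hxU (mem_biUnion hi (hsub (mem_ball_self (stoppingRadius_pos μ f hR lam _))))

lemma exists_ball_stoppingRadius_subset_ball_five_mul (hR : 0 ≤ R) {lam' : ℝ} (hlam : lam ≤ lam')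
    (hc : BijOn c S u)
    (hcover : ∀ x ∈ czCenters μ f x₀ R lam, ∃ y ∈ u,
      ball x (stoppingRadius μ f R lam x) ⊆ ball y (5 * stoppingRadius μ f R lam y))
    {x : X} (hx : x ∈ czCenters μ f x₀ R lam') :
    ∃ j ∈ S, ball x (stoppingRadius μ f R lam' x) ⊆
      ball (c j) (5 * stoppingRadius μ f R lam (c j)) := by
  obtain ⟨y, hy, hsub⟩ := hcover x ⟨hx.1, hx.2.mono hlam⟩
  obtain ⟨j, hj, rfl⟩ := hc.surjOn hy
  exact ⟨j, hj, (ball_subset_ball (stoppingRadius_anti hR hlam hx.2)).trans hsub⟩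

end CalderonZygmund

/-- Iterated Calderón–Zygmund decomposition: given levels
`μ(B₀)⁻¹ ∫_{11B₀} f dμ ≤ λ 0 ≤ λ 1 ≤ ⋯ ≤ λ N`, for each `n ≤ N` there is a family of
Calderón–Zygmund balls for `f` at level `λ n` relative to `B₀`, chosen so that each
ball of the family at level `λ (n+1)` is contained in the `5`-dilate of some ball of
the family at level `λ n`. -/
theorem calderon_zygmund_decomposition_iterated {X : Type*} [MetricSpace X]
    [MeasurableSpace X] [BorelSpace X]
    (μ : Measure X) (cμ : ℝ) (hcμ : 1 ≤ cμ) (hdoub : IsDoubling μ cμ)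
    (f : X → ℝ) (hf0 : ∀ x, 0 ≤ f x)
    (hloc : ∀ (x : X) (r : ℝ), IntegrableOn f (Metric.ball x r) μ)
    (x₀ : X) (R : ℝ) (hR : 0 < R) (N : ℕ) (lam : ℕ → ℝ)
    (hlam0 : (μ (Metric.ball x₀ R)).toReal⁻¹ *
        ∫ x in Metric.ball x₀ (11 * R), f x ∂μ ≤ lam 0)
    (hmono : ∀ n, n < N → lam n ≤ lam (n + 1)) :
    ∃ (S : ℕ → Set ℕ) (c : ℕ → ℕ → X) (r : ℕ → ℕ → ℝ),
      (∀ n, n ≤ N → IsCZBalls μ cμ f x₀ R (lam n) (S n) (c n) (r n)) ∧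
      (∀ n, n < N → ∀ i ∈ S (n + 1), ∃ j ∈ S n,
        Metric.ball (c (n + 1) i) (r (n + 1) i) ⊆ Metric.ball (c n j) (5 * r n j)) := by
  have : Nonempty X := ⟨x₀⟩
  have := hdoub.secondCountableTopology
  have hlam_mono : ∀ n ≤ N, lam 0 ≤ lam n := by
    intro n hn
    induction n with
    | zero => rfl
    | succ n ih => exact (ih (by omega)).trans (hmono n (by omega))
  have hbase : ∀ n ≤ N, ∀ x ∈ ball x₀ R, ⨍ y in ball x (2 * R), f y ∂μ ≤ lam n := fun n hn x hx =>
    ((setAverage_ball_two_mul_le hdoub hf0 hloc hR hx).trans hlam0).trans (hlam_mono n hn)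
  choose u huE hucount hudisj hucover using fun n =>
    exists_countable_pairwiseDisjoint_ball_subset_ball_five_mul (czCenters μ f x₀ R (lam n))
      (stoppingRadius μ f R (lam n)) (R := 2 * R) (fun x _ => stoppingRadius_pos μ f hR _ x)
      (fun x _ => by linarith [five_mul_stoppingRadius_le μ f hR.le (lam n) x,
        stoppingRadius_pos μ f hR (lam n) x])
  choose S c hc using fun n => (hucount n).exists_bijOn_nat
  refine ⟨S, c, fun n i => stoppingRadius μ f R (lam n) (c n i), fun n hn =>
    isCZBalls_of_bijOn hdoub (by linarith) hf0 hloc hR (hbase n hn) (hc n) (huE n) (hudisj n)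
      (hucover n), fun n hn i hi =>
    exists_ball_stoppingRadius_subset_ball_five_mul hR.le (hmono n hn) (hc n) (hucover n)
      (huE (n + 1) ((hc (n + 1)).mapsTo hi))⟩
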